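/- In G(m,p,n), a diagonal element of codimension 2 with non-1 eigenvalues ζ^c and ζ^{−c} (ζ = e^{2πi/m}) can be written as a product of two transposition-type reflections with codimensions adding; in particular it has reflection length 2. -/

import Mathlib

open Module Matrix

noncomputable section

/-- The primitive m-th root of unity e^{2πi/m}. -/
def zeta (m : ℕ) : ℂ := Complex.exp (2 * Real.pi * Complex.I / m)

/-- codim of a matrix: n minus the dimension of its fixed space. -/
def codimM {n : ℕ} (M : Matrix (Fin n) (Fin n) ℂ) : ℕ :=
  n - finrank ℂ (LinearMap.ker (M.mulVecLin - LinearMap.id))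

/-- Membership in the monomial reflection group G(m,p,n): a monomial matrix with
entries m-th roots of unity whose nonzero entries multiply to an (m/p)-th root of unity. -/
def InG (m p n : ℕ) (M : Matrix (Fin n) (Fin n) ℂ) : Prop :=
  ∃ (σ : Equiv.Perm (Fin n)) (d : Fin n → ℂ),
    (∀ j, d j ^ m = 1) ∧ ((∏ j, d j) ^ (m / p) = 1) ∧
    ∀ i j, M i j = if i = σ j then d j else 0

/-- A reflection of G(m,p,n): a nonidentity element of the group fixing a hyperplane
pointwise (i.e. of codimension one). -/
def IsReflM (m p n : ℕ) (M : Matrix (Fin n) (Fin n) ℂ) : Prop :=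
  InG m p n M ∧ M ≠ 1 ∧ codimM M = 1

/-- Reflection length in G(m,p,n). -/
def reflLenM (m p n : ℕ) (M : Matrix (Fin n) (Fin n) ℂ) : ℕ :=
  sInf {k | ∃ l : List (Matrix (Fin n) (Fin n) ℂ),
    (∀ s ∈ l, IsReflM m p n s) ∧ l.length = k ∧ l.prod = M}

/-- Transposition-type reflection: swaps coordinates i and j scaling by ζ^a and ζ^{-a}. -/
def IsTranspRefl (m n : ℕ) (M : Matrix (Fin n) (Fin n) ℂ) : Prop :=
  ∃ (i j : Fin n) (c : ℂ), i ≠ j ∧ c ^ m = 1 ∧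
    M = Matrix.of (fun k l =>
      if k = i ∧ l = j then c
      else if k = j ∧ l = i then c⁻¹
      else if k = l ∧ k ≠ i ∧ k ≠ j then 1 else 0)

/-- The codimension order relation on matrices. -/
def codimLeM {n : ℕ} (a c : Matrix (Fin n) (Fin n) ℂ) : Prop :=
  codimM a + codimM (a⁻¹ * c) = codimM c

/-! On the coordinates `i, j` the diagonal element `diag(z, z⁻¹)` is the product of the
transposition-type reflections with parameters `z` and `1`: composing two scaled swaps of the
same pair is diagonal. Codimension is the rank of `M - 1`; for such a reflection `M - 1` is a
nonzero rank-one matrix, and for `diag(z, z⁻¹)` it is a diagonal matrix with two nonzero entries,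
so the codimensions add up. A product of at most one reflection has codimension at most one,
hence the reflection length is exactly two. -/

namespace Matrix

variable {ι K : Type*} [DecidableEq ι]

theorem rank_pos_of_ne_zero {κ : Type*} [Finite κ] [Fintype ι] [Field K] {A : Matrix κ ι K}
    (hA : A ≠ 0) : 0 < A.rank := by
  rw [Nat.pos_iff_ne_zero, Matrix.rank, ne_eq, Submodule.finrank_eq_zero, LinearMap.range_eq_bot,
    ← Matrix.toLin'_apply', LinearEquiv.map_eq_zero_iff]
  exact hA

def monomialMatrix [Zero K] (σ : Equiv.Perm ι) (d : ι → K) : Matrix ι ι K :=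
  of fun k l => if k = σ l then d l else 0

theorem monomialMatrix_mul [Fintype ι] [Semiring K] (σ τ : Equiv.Perm ι) (d e : ι → K) :
    monomialMatrix σ d * monomialMatrix τ e = monomialMatrix (σ * τ) (fun l => d (τ l) * e l) := by
  ext k l
  rw [mul_apply, Finset.sum_eq_single (τ l)]
  · simp only [monomialMatrix, of_apply, if_pos, ite_mul, zero_mul, Equiv.Perm.mul_apply]
    rfl -- the two sides carry different, defeq, `Zero K` instances
  · simp +contextual [monomialMatrix]
  · simp

variable [Field K] {i j : ι}

def transpRefl (i j : ι) (a : K) : Matrix ι ι K :=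
  of fun k l =>
    if k = i ∧ l = j then a
    else if k = j ∧ l = i then a⁻¹
    else if k = l ∧ k ≠ i ∧ k ≠ j then 1 else 0

def transpReflCoeff (i j : ι) (a : K) : ι → K :=
  fun l => if l = j then a else if l = i then a⁻¹ else 1

theorem transpRefl_eq_monomialMatrix (hij : i ≠ j) (a : K) :
    transpRefl i j a = monomialMatrix (Equiv.swap i j) (transpReflCoeff i j a) := by
  ext k l
  simp only [transpRefl, monomialMatrix, transpReflCoeff, of_apply, Equiv.swap_apply_def]
  split_ifs <;> simp_all

theorem prod_transpReflCoeff [Fintype ι] (hij : i ≠ j) {a : K} (ha : a ≠ 0) :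
    ∏ l, transpReflCoeff i j a l = 1 := by
  rw [← Finset.prod_erase_mul _ _ (Finset.mem_univ j),
    ← Finset.prod_erase_mul _ _ (Finset.mem_erase.2 ⟨hij, Finset.mem_univ i⟩),
    Finset.prod_eq_one fun l hl => by simp_all [transpReflCoeff]]
  simp [transpReflCoeff, hij, ha]

theorem transpRefl_mul_transpRefl [Fintype ι] (hij : i ≠ j) (a b : K) :
    transpRefl i j a * transpRefl i j b =
      diagonal fun k => if k = i then a * b⁻¹ else if k = j then a⁻¹ * b else 1 := by
  rw [transpRefl_eq_monomialMatrix hij, transpRefl_eq_monomialMatrix hij, monomialMatrix_mul,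
    Equiv.swap_mul_self]
  ext k l
  simp only [monomialMatrix, transpReflCoeff, diagonal_apply, of_apply, Equiv.Perm.one_apply,
    Equiv.swap_apply_def]
  grind

theorem transpRefl_sub_one (hij : i ≠ j) {a : K} (ha : a ≠ 0) :
    transpRefl i j a - 1 =
      vecMulVec (fun k => if k = i then -1 else if k = j then a⁻¹ else 0)
        (fun l => if l = i then 1 else if l = j then -a else 0) := by
  ext k l
  simp only [transpRefl, sub_apply, one_apply, vecMulVec_apply, of_apply]
  split_ifs <;> simp_all

theorem rank_transpRefl_sub_one [Fintype ι] (hij : i ≠ j) {a : K} (ha : a ≠ 0) :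
    (transpRefl i j a - 1).rank = 1 := by
  refine le_antisymm (transpRefl_sub_one hij ha ▸ rank_vecMulVec_le _ _) (rank_pos_of_ne_zero ?_)
  intro h
  simpa [transpRefl, hij] using congr_fun₂ h i i

end Matrix

theorem zeta_pow_self (m : ℕ) : zeta m ^ m = 1 := by
  rcases eq_or_ne m 0 with rfl | hm
  · exact pow_zero _
  · exact (Complex.isPrimitiveRoot_exp m hm).pow_eq_one

theorem zeta_ne_zero (m : ℕ) : zeta m ≠ 0 :=
  Complex.exp_ne_zero _

section Codim

variable {n : ℕ}

theorem codimM_eq_rank (M : Matrix (Fin n) (Fin n) ℂ) : codimM M = (M - 1).rank := by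
  have hsub : (M - 1).mulVecLin = M.mulVecLin - LinearMap.id := by
    rw [← toLin'_apply', map_sub, toLin'_one, toLin'_apply']
  have := LinearMap.finrank_range_add_finrank_ker (M.mulVecLin - LinearMap.id)
  rw [finrank_fin_fun] at this
  rw [codimM, rank, hsub]
  omega

theorem codimM_one : codimM (1 : Matrix (Fin n) (Fin n) ℂ) = 0 := by
  rw [codimM_eq_rank, sub_self, rank_zero]

theorem codimM_diagonal (d : Fin n → ℂ) :
    codimM (diagonal d) = (Finset.univ.filter fun k => d k ≠ 1).card := by
  rw [codimM_eq_rank, ← diagonal_one, diagonal_sub, rank_diagonal, Fintype.card_subtype]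
  simp only [ne_eq, sub_eq_zero]

theorem codimM_diagonal_inv_pair {i j : Fin n} (hij : i ≠ j) {z : ℂ} (hz : z ≠ 1) :
    codimM (diagonal fun k => if k = i then z else if k = j then z⁻¹ else 1) = 2 := by
  rw [codimM_diagonal, ← Finset.card_pair hij]
  congr 1
  ext k
  rcases eq_or_ne k i with rfl | hki
  · simp [hz]
  · rcases eq_or_ne k j with rfl | hkj
    · simp [hki, hz]
    · simp [hki, hkj]

theorem codimM_transpRefl {i j : Fin n} (hij : i ≠ j) {a : ℂ} (ha : a ≠ 0) :
    codimM (transpRefl i j a) = 1 := by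
  rw [codimM_eq_rank, rank_transpRefl_sub_one hij ha]

end Codim

section ReflectionLength

variable {m p n : ℕ}

theorem isReflM_transpRefl {i j : Fin n} (hij : i ≠ j) {a : ℂ} (ha : a ^ m = 1) (ha0 : a ≠ 0) :
    IsReflM m p n (transpRefl i j a) := by
  have hcodim := codimM_transpRefl hij ha0
  refine ⟨⟨Equiv.swap i j, transpReflCoeff i j a, fun l => ?_, ?_, fun k l => ?_⟩, ?_, hcodim⟩
  · unfold transpReflCoeff
    split_ifs <;> simp [ha]
  · rw [prod_transpReflCoeff hij ha0, one_pow]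
  · rw [transpRefl_eq_monomialMatrix hij]; rfl
  · rintro h
    rw [h, codimM_one] at hcodim
    exact zero_ne_one hcodim

theorem two_le_length_of_forall_isReflM {l : List (Matrix (Fin n) (Fin n) ℂ)}
    (hl : ∀ s ∈ l, IsReflM m p n s) (hcodim : 2 ≤ codimM l.prod) : 2 ≤ l.length := by
  match l, hl, hcodim with
  | [], _, hcodim => simp [codimM_one] at hcodim
  | [s], hl, hcodim => simp [(hl s (by simp)).2.2] at hcodim
  | _ :: _ :: _, _, _ => simp

theorem reflLenM_mul_eq_two {s t : Matrix (Fin n) (Fin n) ℂ} (hs : IsReflM m p n s)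
    (ht : IsReflM m p n t) (hcodim : 2 ≤ codimM (s * t)) : reflLenM m p n (s * t) = 2 := by
  refine le_antisymm (Nat.sInf_le ⟨[s, t], by simp [hs, ht], rfl, by simp⟩) ?_
  refine le_csInf ⟨2, [s, t], by simp [hs, ht], rfl, by simp⟩ ?_
  rintro k ⟨l, hl, rfl, hprod⟩
  exact two_le_length_of_forall_isReflM hl (hprod ▸ hcodim)

end ReflectionLength

theorem diag_codim_two_det_one_factors_general (m p n : ℕ)
    (i j : Fin n) (hij : i ≠ j) (c : ℕ) (hc : zeta m ^ c ≠ 1)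
    (g : Matrix (Fin n) (Fin n) ℂ)
    (hg : g = Matrix.diagonal (fun k : Fin n =>
      if k = i then zeta m ^ c else if k = j then (zeta m ^ c)⁻¹ else 1)) :
    ∃ s t : Matrix (Fin n) (Fin n) ℂ,
      IsTranspRefl m n s ∧ IsTranspRefl m n t ∧ g = s * t ∧
      codimM s + codimM t = codimM g ∧ reflLenM m p n g = 2 := by
  set z := zeta m ^ c
  have hz0 : z ≠ 0 := pow_ne_zero c (zeta_ne_zero m)
  have hzm : z ^ m = 1 := by rw [← pow_mul, mul_comm, pow_mul, zeta_pow_self, one_pow]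
  have hst : g = transpRefl i j z * transpRefl i j 1 := by
    rw [hg, transpRefl_mul_transpRefl hij]
    simp only [inv_one, mul_one]
  have hcodim : codimM g = 2 := hg ▸ codimM_diagonal_inv_pair hij hc
  refine ⟨transpRefl i j z, transpRefl i j 1, ⟨i, j, z, hij, hzm, rfl⟩,
    ⟨i, j, 1, hij, one_pow m, rfl⟩, hst, ?_, ?_⟩
  · rw [codimM_transpRefl hij hz0, codimM_transpRefl hij one_ne_zero, hcodim]
  · rw [hst] at hcodim ⊢
    exact reflLenM_mul_eq_two (isReflM_transpRefl hij hzm hz0)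
      (isReflM_transpRefl hij (one_pow m) one_ne_zero) hcodim.ge

theorem diag_codim_two_det_one_factors (m p n : ℕ) (hm : 0 < m) (hp : p ∣ m)
    (i j : Fin n) (hij : i ≠ j) (c : ℕ) (hc : zeta m ^ c ≠ 1)
    (g : Matrix (Fin n) (Fin n) ℂ)
    (hg : g = Matrix.diagonal (fun k : Fin n =>
      if k = i then zeta m ^ c else if k = j then (zeta m ^ c)⁻¹ else 1)) :
    ∃ s t : Matrix (Fin n) (Fin n) ℂ,
      IsTranspRefl m n s ∧ IsTranspRefl m n t ∧ g = s * t ∧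
      codimM s + codimM t = codimM g ∧ reflLenM m p n g = 2 :=
  diag_codim_two_det_one_factors_general m p n i j hij c hc g hg
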